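/- If M is a P_s-matrix with all entries nonnegative, and the set θ := {i : q_i < 0} satisfies |θ| ≤ s, then the sparse LCP sol(M,q) ∩ {x : ‖x‖₀ ≤ s} is nonempty and contains a unique point x* with supp(x*) ⊆ θ. -/

import Mathlib

open Matrix

noncomputable def phi (r a b : ℝ) : ℝ :=
  (1 / r) * ((max a 0) ^ r * (max b 0) ^ r + (max (-a) 0) ^ r + (max (-b) 0) ^ r)

/-- The merit function `f_r(x) = Σᵢ φ_r(xᵢ, (Mx+q)ᵢ)`. -/
noncomputable def fr {n : ℕ} (r : ℝ) (M : Matrix (Fin n) (Fin n) ℝ) (q : Fin n → ℝ)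
    (x : Fin n → ℝ) : ℝ :=
  ∑ i, phi r (x i) (M.mulVec x i + q i)

/-- The solution set of the LCP. -/
def solSet {n : ℕ} (M : Matrix (Fin n) (Fin n) ℝ) (q : Fin n → ℝ) : Set (Fin n → ℝ) :=
  {x | (∀ i, 0 ≤ x i) ∧ (∀ i, 0 ≤ M.mulVec x i + q i) ∧
       ∑ i, x i * (M.mulVec x i + q i) = 0}

/-- The number of nonzero entries of a vector. -/
noncomputable def zeroNorm {n : ℕ} (x : Fin n → ℝ) : ℕ :=
  (Finset.univ.filter (fun i => x i ≠ 0)).card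

/-- A P-matrix: all principal minors are positive. -/
def IsPMatrix {m : Type*} [Fintype m] [DecidableEq m] (A : Matrix m m ℝ) : Prop :=
  ∀ T : Finset m, T.Nonempty →
    0 < (A.submatrix (fun i : T => (i : m)) (fun i : T => (i : m))).det

/-- A P_s-matrix: all principal minors of order up to `s` are positive. -/
def IsPsMatrix {m : Type*} [Fintype m] [DecidableEq m] (s : ℕ) (A : Matrix m m ℝ) : Prop :=
  ∀ T : Finset m, T.Nonempty → T.card ≤ s →
    0 < (A.submatrix (fun i : T => (i : m)) (fun i : T => (i : m))).det

/-!
On `θ = {i | q i < 0}` the data `(M_θθ, q_θ)` form an LCP whose matrix is a P-matrix, because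
`|θ| ≤ s`. A P-matrix reverses the sign of no nonzero vector: otherwise adding a nonnegative
diagonal matrix would make it singular, whereas `det (A + D)` is a nonnegative combination of
principal minors of `A` containing `det A > 0`. This sign property alone gives uniqueness, and
existence by induction on the index set: it passes to the Schur complement of a new pivot `k`,
and if neither the old solution nor the pivoted one extends to `k`, their difference is a
sign-reversed vector. Extended by zero, the solution on `θ` solves the whole LCP since `M ≥ 0`
and `q ≥ 0` off `θ`; conversely, every solution supported in `θ` solves the one on `θ`.
-/

open Finset

variable {m : Type*}

lemma det_submatrix_map [DecidableEq m] {m' : Type*} [DecidableEq m'] (A : Matrix m m ℝ)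
    (f : m' ↪ m) (S : Finset m') :
    ((A.submatrix f f).submatrix ((↑) : S → m') (↑)).det =
      (A.submatrix ((↑) : S.map f → m) (↑)).det := by
  rw [submatrix_submatrix, ← det_submatrix_equiv_self (S.equivMap f)]
  rfl

variable [Fintype m]

lemma mulVec_submatrix_val_apply (A : Matrix m m ℝ) {U : Finset m} {z : m → ℝ}
    (hz : ∀ i ∉ U, z i = 0) (i : U) :
    (A.submatrix ((↑) : U → m) ((↑) : U → m) *ᵥ fun j : U => z j) i = (A *ᵥ z) i := by
  simp only [mulVec, dotProduct, submatrix_apply]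
  rw [sum_coe_sort U fun j => A i j * z j]
  exact sum_subset (subset_univ U) fun j _ hj => by simp [hz j hj]

lemma Matrix.mulVec_add_single_apply [DecidableEq m] (A : Matrix m m ℝ) (z : m → ℝ) (k : m)
    (t : ℝ) (i : m) : (A *ᵥ (z + Pi.single k t)) i = (A *ᵥ z) i + A i k * t := by
  simp [mulVec_add, mul_comm]

section PMatrix

variable [DecidableEq m]

lemma IsPMatrix.det_submatrix_pos {A : Matrix m m ℝ} (hA : IsPMatrix A) (S : Finset m) :
    0 < (A.submatrix ((↑) : S → m) (↑)).det := by
  rcases S.eq_empty_or_nonempty with rfl | hS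
  · simp
  · exact hA S hS

lemma IsPsMatrix.isPMatrix_submatrix {s : ℕ} {A : Matrix m m ℝ} (hA : IsPsMatrix s A)
    {U : Finset m} (hU : #U ≤ s) : IsPMatrix (A.submatrix ((↑) : U → m) (↑)) := by
  intro S hS
  rw [show ((↑) : U → m) = Function.Embedding.subtype (· ∈ U) from rfl, det_submatrix_map]
  exact hA _ hS.map ((card_map _).trans_le ((card_le_univ S).trans (by simpa using hU)))

/-- The term of the multilinear expansion of `det (A + diagonal d)` taking the rows in `S`
from `A`. -/
lemma det_piecewise_diagonal (A : Matrix m m ℝ) (d : m → ℝ) (S : Finset m) :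
    (of (S.piecewise (fun i => A i) (fun i => diagonal d i))).det =
      (A.submatrix ((↑) : S → m) (↑)).det * ∏ i : {i // i ∉ S}, d i := by
  rw [← det_submatrix_equiv_self (Equiv.sumCompl (· ∈ S)),
    show (of (S.piecewise (fun i => A i) (fun i => diagonal d i))).submatrix
        (Equiv.sumCompl (· ∈ S)) (Equiv.sumCompl (· ∈ S)) =
      fromBlocks (A.submatrix ((↑) : S → m) (↑)) (A.submatrix (↑) (↑)) 0
        (diagonal fun i : {i // i ∉ S} => d i) by
      ext (i | i) (j | j)
      · simp [i.2]
      · simp [i.2]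
      · simp [i.2, diagonal_apply_ne _ (ne_of_mem_of_not_mem j.2 i.2).symm]
      · simp [i.2, diagonal_apply, Subtype.ext_iff],
    det_fromBlocks_zero₂₁, det_diagonal]

lemma det_add_diagonal_eq_sum (A : Matrix m m ℝ) (d : m → ℝ) :
    (A + diagonal d).det =
      ∑ S : Finset m, (A.submatrix ((↑) : S → m) (↑)).det * ∏ i : {i // i ∉ S}, d i :=
  (detRowAlternating.map_add_univ (fun i => A i) (fun i => diagonal d i)).trans
    (sum_congr rfl fun S _ => det_piecewise_diagonal A d S)

lemma IsPMatrix.det_add_diagonal_pos {A : Matrix m m ℝ} (hA : IsPMatrix A) {d : m → ℝ}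
    (hd : ∀ i, 0 ≤ d i) : 0 < (A + diagonal d).det := by
  rw [det_add_diagonal_eq_sum]
  refine sum_pos' (fun S _ => ?_) ⟨univ, mem_univ _, ?_⟩
  · exact mul_nonneg (hA.det_submatrix_pos S).le (prod_nonneg fun i _ => hd i)
  · have : IsEmpty {i // i ∉ (univ : Finset m)} := ⟨fun i => i.2 (mem_univ _)⟩
    simpa using hA.det_submatrix_pos univ

/-- If `z i * (A z) i ≤ 0` with all `z i ≠ 0`, then `D = diagonal (-(A z) / z) ≥ 0` and
`(A + D) z = 0`, against `det (A + D) > 0`. -/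
lemma IsPMatrix.exists_pos_mul_mulVec [Nonempty m] {A : Matrix m m ℝ} (hA : IsPMatrix A)
    {z : m → ℝ} (hz : ∀ i, z i ≠ 0) : ∃ i, 0 < z i * (A *ᵥ z) i := by
  by_contra! h
  have hd : ∀ i, 0 ≤ -(A *ᵥ z) i / z i := fun i => by
    rw [show -(A *ᵥ z) i / z i = -(z i * (A *ᵥ z) i) / z i ^ 2 by field_simp [hz i]]
    exact div_nonneg (neg_nonneg.2 (h i)) (sq_nonneg _)
  have hker : (A + diagonal fun i => -(A *ᵥ z) i / z i) *ᵥ z = 0 := by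
    ext i
    simp [add_mulVec, mulVec_diagonal, div_mul_cancel₀ _ (hz i)]
  obtain ⟨i⟩ := ‹Nonempty m›
  exact (hA.det_add_diagonal_pos hd).ne'
    (exists_mulVec_eq_zero_iff.1 ⟨z, fun h0 => hz i (congrFun h0 i), hker⟩)

end PMatrix

/-- For `T = univ` this characterizes P-matrices (Fiedler–Pták). -/
def NoSignReversalOn (A : Matrix m m ℝ) (T : Finset m) : Prop :=
  ∀ z : m → ℝ, (∀ i ∉ T, z i = 0) → (∀ i ∈ T, z i * (A *ᵥ z) i ≤ 0) → z = 0

lemma IsPsMatrix.noSignReversalOn [DecidableEq m] {s : ℕ} {A : Matrix m m ℝ}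
    (hA : IsPsMatrix s A) {T : Finset m} (hT : #T ≤ s) : NoSignReversalOn A T := by
  intro z hzT hz
  by_contra hne
  set U := univ.filter fun i => z i ≠ 0
  have hUT : U ⊆ T := fun i hi => by_contra fun h => (mem_filter.1 hi).2 (hzT i h)
  have hzU : ∀ i ∉ U, z i = 0 := fun i hi => by simpa [U] using hi
  obtain ⟨i₀, hi₀⟩ := Function.ne_iff.1 hne
  have : Nonempty U := ⟨⟨i₀, by simpa [U] using hi₀⟩⟩
  obtain ⟨i, hi⟩ := (hA.isPMatrix_submatrix ((card_le_card hUT).trans hT)).exists_pos_mul_mulVec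
    (z := fun j : U => z j) fun j => (mem_filter.1 j.2).2
  rw [mulVec_submatrix_val_apply A hzU i] at hi
  exact hi.not_ge (hz i (hUT i.2))

/-- Pivot on `A k k`: the Schur complement of the block `{k}`, kept indexed by `m` (its row
and column `k` vanish when `A k k ≠ 0`). -/
noncomputable def Matrix.schurComplement (A : Matrix m m ℝ) (k : m) : Matrix m m ℝ :=
  of fun i j => A i j - A i k * A k j / A k k

namespace Matrix

variable {A : Matrix m m ℝ} {k : m}

lemma schurComplement_mulVec_apply (A : Matrix m m ℝ) (k : m) (z : m → ℝ) (i : m) :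
    (A.schurComplement k *ᵥ z) i = (A *ᵥ z) i - A i k * (A *ᵥ z) k / A k k := by
  simp only [mulVec, dotProduct, schurComplement, of_apply, sub_mul, sum_sub_distrib,
    mul_div_assoc, sum_div, mul_sum]
  exact congrArg _ (sum_congr rfl fun j _ => by ring)

lemma schurComplement_mulVec_apply_self (hkk : A k k ≠ 0) (z : m → ℝ) :
    (A.schurComplement k *ᵥ z) k = 0 := by
  rw [schurComplement_mulVec_apply, mul_div_cancel_left₀ _ hkk, sub_self]

/-- Completing `y` at `k` so that the `k`-th slack vanishes turns the slacks of the pivoted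
problem into those of the original one. -/
lemma mulVec_add_single_add_eq [DecidableEq m] (hkk : A k k ≠ 0) (y b : m → ℝ) (i : m) :
    (A *ᵥ (y + Pi.single k (-((A *ᵥ y) k + b k) / A k k))) i + b i =
      (A.schurComplement k *ᵥ y) i + (b i - A i k * b k / A k k) := by
  rw [mulVec_add_single_apply, schurComplement_mulVec_apply]
  field_simp
  ring

end Matrix

namespace NoSignReversalOn

variable {A : Matrix m m ℝ} {T : Finset m}

lemma mono {T' : Finset m} (hA : NoSignReversalOn A T') (hTT' : T ⊆ T') :
    NoSignReversalOn A T := fun z hzT hz =>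
  hA z (fun i hi => hzT i fun h => hi (hTT' h)) fun i _ => by
    by_cases hiT : i ∈ T
    · exact hz i hiT
    · simp [hzT i hiT]

variable [DecidableEq m] {k : m}

lemma diag_pos (hA : NoSignReversalOn A T) (hk : k ∈ T) : 0 < A k k := by
  by_contra! hkk
  have h := hA (Pi.single k 1)
    (fun i hi => Pi.single_eq_of_ne (ne_of_mem_of_not_mem hk hi).symm _) fun i _ => by
      rcases eq_or_ne i k with rfl | hik
      · simpa using hkk
      · simp [hik]
  simpa using congrFun h k

lemma schurComplement (hA : NoSignReversalOn A (insert k T)) (hk : k ∉ T) :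
    NoSignReversalOn (A.schurComplement k) T := by
  intro z hzT hz
  have hkk := (hA.diag_pos (mem_insert_self k T)).ne'
  set z' := z + Pi.single k (-(A *ᵥ z) k / A k k)
  have hz' : ∀ i, (A *ᵥ z') i = (A.schurComplement k *ᵥ z) i := fun i => by
    simpa using mulVec_add_single_add_eq hkk z 0 i
  have hz'0 : z' = 0 := hA z' (fun i hi => by
      rw [mem_insert, not_or] at hi
      simp [z', hzT i hi.2, hi.1]) fun i hi => by
    rcases mem_insert.1 hi with rfl | hiT
    · rw [hz', schurComplement_mulVec_apply_self hkk, mul_zero]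
    · simpa [z', hz', Pi.single_eq_of_ne (ne_of_mem_of_not_mem hiT hk)] using hz i hiT
  ext i
  rcases eq_or_ne i k with rfl | hik
  · exact hzT i hk
  · simpa [z', hik] using congrFun hz'0 i

end NoSignReversalOn

/-- `x` solves the principal subproblem `LCP(A_TT, b_T)` and vanishes off `T`. -/
structure IsLCPSolOn (A : Matrix m m ℝ) (b : m → ℝ) (T : Finset m) (x : m → ℝ) :
    Prop where
  eq_zero : ∀ i ∉ T, x i = 0
  nonneg : ∀ i ∈ T, 0 ≤ x i
  slack_nonneg : ∀ i ∈ T, 0 ≤ (A *ᵥ x) i + b i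
  complementary : ∀ i ∈ T, x i * ((A *ᵥ x) i + b i) = 0

lemma sub_mul_sub_nonpos_of_mul_eq_zero {x y u v : ℝ} (hx : 0 ≤ x) (hy : 0 ≤ y) (hu : 0 ≤ u)
    (hv : 0 ≤ v) (hxu : x * u = 0) (hyv : y * v = 0) : (x - y) * (u - v) ≤ 0 := by
  nlinarith [mul_nonneg hx hv, mul_nonneg hy hu]

section LCP

variable {A : Matrix m m ℝ} {b : m → ℝ} {T : Finset m}

lemma IsLCPSolOn.sub_mul_mulVec_sub_nonpos {x y : m → ℝ} (hx : IsLCPSolOn A b T x)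
    (hy : IsLCPSolOn A b T y) {i : m} (hi : i ∈ T) : (x - y) i * (A *ᵥ (x - y)) i ≤ 0 := by
  rw [mulVec_sub, Pi.sub_apply, Pi.sub_apply,
    ← add_sub_add_right_eq_sub ((A *ᵥ x) i) _ (b i)]
  exact sub_mul_sub_nonpos_of_mul_eq_zero (hx.nonneg i hi) (hy.nonneg i hi)
    (hx.slack_nonneg i hi) (hy.slack_nonneg i hi) (hx.complementary i hi) (hy.complementary i hi)

lemma NoSignReversalOn.isLCPSolOn_unique (hA : NoSignReversalOn A T) {x y : m → ℝ}
    (hx : IsLCPSolOn A b T x) (hy : IsLCPSolOn A b T y) : x = y :=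
  sub_eq_zero.1 <| hA _ (fun i hi => by simp [hx.eq_zero i hi, hy.eq_zero i hi])
    fun _ hi => hx.sub_mul_mulVec_sub_nonpos hy hi

variable [DecidableEq m] {k : m}

lemma IsLCPSolOn.insert_of_slack_nonneg {x : m → ℝ} (hx : IsLCPSolOn A b T x) (hk : k ∉ T)
    (hxk : 0 ≤ (A *ᵥ x) k + b k) : IsLCPSolOn A b (insert k T) x := by
  have hx0 : x k = 0 := hx.eq_zero k hk
  refine ⟨fun i hi => hx.eq_zero i fun h => hi (mem_insert_of_mem h), ?_, ?_, ?_⟩ <;>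
    intro i hi <;> rcases mem_insert.1 hi with rfl | hiT
  · exact hx0.ge
  · exact hx.nonneg i hiT
  · exact hxk
  · exact hx.slack_nonneg i hiT
  · rw [hx0, zero_mul]
  · exact hx.complementary i hiT

lemma IsLCPSolOn.insert_add_single {y : m → ℝ}
    (hy : IsLCPSolOn (A.schurComplement k) (fun i => b i - A i k * b k / A k k) T y)
    (hk : k ∉ T) (hkk : A k k ≠ 0) (ht : 0 ≤ -((A *ᵥ y) k + b k) / A k k) :
    IsLCPSolOn A b (insert k T) (y + Pi.single k (-((A *ᵥ y) k + b k) / A k k)) := by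
  have hslack := mulVec_add_single_add_eq hkk y b
  set t := -((A *ᵥ y) k + b k) / A k k
  have hslack_k : (A *ᵥ (y + Pi.single k t)) k + b k = 0 := by
    rw [hslack, schurComplement_mulVec_apply_self hkk, mul_div_cancel_left₀ _ hkk]
    ring
  have hy_of_mem : ∀ i ∈ T, (y + Pi.single k t : m → ℝ) i = y i :=
    fun i hi => by simp [Pi.single_eq_of_ne (ne_of_mem_of_not_mem hi hk)]
  refine ⟨fun i hi => ?_, ?_, ?_, ?_⟩
  · rw [mem_insert, not_or] at hi
    simp [hy.eq_zero i hi.2, hi.1]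
  all_goals intro i hi; rcases mem_insert.1 hi with rfl | hiT
  · simpa [hy.eq_zero i hk] using ht
  · exact (hy_of_mem i hiT).symm ▸ hy.nonneg i hiT
  · exact hslack_k.ge
  · exact (hslack i).symm ▸ hy.slack_nonneg i hiT
  · rw [hslack_k, mul_zero]
  · rw [hy_of_mem i hiT, hslack i]
    exact hy.complementary i hiT

/-- Otherwise `x - (y + t • e_k)` would be a nonzero vector whose sign `A` reverses on
`insert k T`. -/
lemma NoSignReversalOn.slack_nonneg_or_nonneg (hA : NoSignReversalOn A (insert k T))
    (hk : k ∉ T) {x y : m → ℝ} (hx : IsLCPSolOn A b T x)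
    (hy : IsLCPSolOn (A.schurComplement k) (fun i => b i - A i k * b k / A k k) T y) :
    0 ≤ (A *ᵥ x) k + b k ∨ 0 ≤ -((A *ᵥ y) k + b k) / A k k := by
  have hkk := (hA.diag_pos (mem_insert_self k T)).ne'
  have hslack := mulVec_add_single_add_eq hkk y b
  set t := -((A *ᵥ y) k + b k) / A k k
  by_contra! h
  have hxy := hA (x - (y + Pi.single k t)) (fun i hi => by
      rw [mem_insert, not_or] at hi
      simp [hx.eq_zero i hi.2, hy.eq_zero i hi.2, hi.1]) fun i hi => by
    rw [mulVec_sub, Pi.sub_apply, Pi.sub_apply,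
      ← add_sub_add_right_eq_sub ((A *ᵥ x) i) _ (b i), hslack]
    rcases mem_insert.1 hi with rfl | hiT
    · rw [schurComplement_mulVec_apply_self hkk, hx.eq_zero i hk, Pi.add_apply,
        hy.eq_zero i hk, Pi.single_eq_same, mul_div_cancel_left₀ _ hkk]
      nlinarith [h.1, h.2]
    · rw [Pi.add_apply, Pi.single_eq_of_ne (ne_of_mem_of_not_mem hiT hk), add_zero]
      exact sub_mul_sub_nonpos_of_mul_eq_zero (hx.nonneg i hiT) (hy.nonneg i hiT)
        (hx.slack_nonneg i hiT) (hy.slack_nonneg i hiT) (hx.complementary i hiT)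
        (hy.complementary i hiT)
  simpa [hx.eq_zero k hk, hy.eq_zero k hk, h.2.ne] using congrFun hxy k

theorem NoSignReversalOn.exists_isLCPSolOn (hA : NoSignReversalOn A T) (b : m → ℝ) :
    ∃ x, IsLCPSolOn A b T x := by
  induction T using Finset.induction_on generalizing A b with
  | empty => exact ⟨0, fun _ _ => rfl, by simp, by simp, by simp⟩
  | insert k T hk ih =>
    obtain ⟨x, hx⟩ := ih (hA.mono (subset_insert k T)) b
    obtain ⟨y, hy⟩ := ih (hA.schurComplement hk) fun i => b i - A i k * b k / A k k
    rcases hA.slack_nonneg_or_nonneg hk hx hy with hxk | ht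
    · exact ⟨x, hx.insert_of_slack_nonneg hk hxk⟩
    · exact ⟨_, hy.insert_add_single hk (hA.diag_pos (mem_insert_self k T)).ne' ht⟩

end LCP

section SolSet

variable {n : ℕ} {M : Matrix (Fin n) (Fin n) ℝ} {q x : Fin n → ℝ} {T : Finset (Fin n)}

lemma IsLCPSolOn.mem_solSet (hx : IsLCPSolOn M q T x) (hM : ∀ i j, 0 ≤ M i j)
    (hq : ∀ i ∉ T, 0 ≤ q i) : x ∈ solSet M q := by
  have hx0 : ∀ i, 0 ≤ x i := fun i => by
    by_cases hi : i ∈ T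
    · exact hx.nonneg i hi
    · exact (hx.eq_zero i hi).ge
  refine ⟨hx0, fun i => ?_, sum_eq_zero fun i _ => ?_⟩ <;> by_cases hi : i ∈ T
  · exact hx.slack_nonneg i hi
  · exact add_nonneg (dotProduct_nonneg_of_nonneg (hM i) hx0) (hq i hi)
  · exact hx.complementary i hi
  · rw [hx.eq_zero i hi, zero_mul]

lemma isLCPSolOn_of_mem_solSet (hx : x ∈ solSet M q) (hT : ∀ i ∉ T, x i = 0) :
    IsLCPSolOn M q T x :=
  ⟨hT, fun i _ => hx.1 i, fun i _ => hx.2.1 i, fun i _ =>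
    (sum_eq_zero_iff_of_nonneg fun j _ => mul_nonneg (hx.1 j) (hx.2.1 j)).1 hx.2.2 i (mem_univ i)⟩

end SolSet

theorem stmt_14_general {n : ℕ} (s : ℕ)
    (M : Matrix (Fin n) (Fin n) ℝ) (hP : IsPsMatrix s M)
    (hM : ∀ i j, 0 ≤ M i j) (q : Fin n → ℝ)
    (hθ : (Finset.univ.filter (fun i => q i < 0)).card ≤ s) :
    (solSet M q ∩ {x | zeroNorm x ≤ s}).Nonempty ∧
    (∃! x : Fin n → ℝ, x ∈ solSet M q ∧ zeroNorm x ≤ s ∧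
      ∀ i, x i ≠ 0 → q i < 0) := by
  set θ := univ.filter fun i => q i < 0
  have hnotMem : ∀ {i}, i ∉ θ ↔ 0 ≤ q i := by simp [θ]
  have hA := hP.noSignReversalOn hθ
  obtain ⟨x, hx⟩ := hA.exists_isLCPSolOn q
  have hsol := hx.mem_solSet hM fun i => hnotMem.1
  have hsupp : ∀ i, x i ≠ 0 → q i < 0 := fun i hi =>
    not_le.1 fun h => hi (hx.eq_zero i (hnotMem.2 h))
  have hnorm : zeroNorm x ≤ s :=
    (card_le_card fun i hi => by simpa [θ] using hsupp i (mem_filter.1 hi).2).trans hθ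
  refine ⟨⟨x, hsol, hnorm⟩, x, ⟨hsol, hnorm, hsupp⟩, fun y ⟨hy, _, hysupp⟩ => ?_⟩
  refine hA.isLCPSolOn_unique (isLCPSolOn_of_mem_solSet hy fun i hi => ?_) hx
  by_contra h
  exact (hnotMem.1 hi).not_gt (hysupp i h)

theorem stmt_14 {n : ℕ} (s : ℕ) (hs : 0 < s) (hsn : s ≤ n)
    (M : Matrix (Fin n) (Fin n) ℝ) (hP : IsPsMatrix s M)
    (hM : ∀ i j, 0 ≤ M i j) (q : Fin n → ℝ)
    (hθ : (Finset.univ.filter (fun i => q i < 0)).card ≤ s) :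
    (solSet M q ∩ {x | zeroNorm x ≤ s}).Nonempty ∧
    (∃! x : Fin n → ℝ, x ∈ solSet M q ∧ zeroNorm x ≤ s ∧
      ∀ i, x i ≠ 0 → q i < 0) :=
  stmt_14_general s M hP hM q hθ
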